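/- arXiv:1701.05430 — 6 statements merged into one kernel-verified Lean document; each statement's English description precedes it below -/
import Mathlib

section
/- Let K/k be a field extension of characteristic p > 0. Any two r-bases of K/k have the same cardinality. -/
/-!
Common definitions: purely inseparable extension theory (r-bases, degree of
irrationality, relative perfect closure, modularity), following Fliouet,
"Extensions absolument lq-finies".
-/

open IntermediateField

noncomputable section

/-- `k(K^p)`: the intermediate field of `K/k` generated by the `p`-th powers of `K`. -/
def pClosure (k K : Type*) [Field k] [Field K] [Algebra k K] (p : ℕ) : IntermediateField k K :=
  adjoin k {x : K | ∃ y : K, y ^ p = x}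

/-- `k(K^{p^n})`. -/
def pnClosure (k K : Type*) [Field k] [Field K] [Algebra k K] (p n : ℕ) : IntermediateField k K :=
  adjoin k {x : K | ∃ y : K, y ^ p ^ n = x}

/-- `k(L^p)` for an intermediate field `L` of `Ω/k`. -/
def pClosureOf {k Ω : Type*} [Field k] [Field Ω] [Algebra k Ω] (p : ℕ)
    (L : IntermediateField k Ω) : IntermediateField k Ω :=
  adjoin k {x : Ω | ∃ y ∈ L, y ^ p = x}

/-- `B` is `r`-free over the intermediate field `L` (typically `L = k(K^p)`):
no `x ∈ B` belongs to `L(B \ {x})`. -/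
def RFreeOver {k K : Type*} [Field k] [Field K] [Algebra k K]
    (L : IntermediateField k K) (B : Set K) : Prop :=
  ∀ x ∈ B, x ∉ adjoin L (B \ {x})

/-- `B` is an `r`-basis of `K/k` : `K = k(K^p)(B)` and `B` is `r`-free over `k(K^p)`. -/
def RBasis (k K : Type*) [Field k] [Field K] [Algebra k K] (p : ℕ) (B : Set K) : Prop :=
  adjoin (pClosure k K p) B = ⊤ ∧ RFreeOver (pClosure k K p) B

/-- `B` is an `r`-basis of `L/F` where `F ≤ L` are intermediate fields of `Ω/k`:
`L = F(L^p)(B)` and no `x ∈ B` lies in `F(L^p)(B \ {x})`. -/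
def RBasisRel {k Ω : Type*} [Field k] [Field Ω] [Algebra k Ω] (p : ℕ)
    (F L : IntermediateField k Ω) (B : Set Ω) : Prop :=
  B ⊆ (L : Set Ω) ∧ F ⊔ pClosureOf p L ⊔ adjoin k B = L ∧
    ∀ x ∈ B, x ∉ F ⊔ pClosureOf p L ⊔ adjoin k (B \ {x})

/-- The degree of irrationality of a bounded-exponent extension:
the cardinality of an `r`-basis of `K/k`. -/
def diCard (k K : Type*) [Field k] [Field K] [Algebra k K] (p : ℕ) : Cardinal :=
  sInf {c : Cardinal | ∃ B : Set K, RBasis k K p B ∧ Cardinal.mk B = c}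

/-- `k^{p^{-n}} ∩ K = {x ∈ K | x^{p^n} ∈ k}`. -/
def expleq (k K : Type*) [Field k] [Field K] [Algebra k K] (p n : ℕ) : IntermediateField k K :=
  adjoin k {x : K | x ^ p ^ n ∈ (algebraMap k K).range}

/-- The degree of irrationality `di(K/k) = sup_n di(k^{p^{-n}} ∩ K / k)`. -/
def di (k K : Type*) [Field k] [Field K] [Algebra k K] (p : ℕ) : Cardinal :=
  ⨆ n : ℕ, diCard k (expleq k K p n) p

/-- The relative perfect closure `rp(K/k)`: the largest intermediate field `L`
with `k(L^p) = L`. -/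
def rp (k K : Type*) [Field k] [Field K] [Algebra k K] (p : ℕ) : IntermediateField k K :=
  sSup {L : IntermediateField k K | pClosureOf p L = L}

/-- `K/k` has unbounded exponent. -/
def UnboundedExp (k K : Type*) [Field k] [Field K] [Algebra k K] (p : ℕ) : Prop :=
  ∀ e : ℕ, ∃ x : K, x ^ p ^ e ∉ (algebraMap k K).range

/-- `K^{p^n}` as a subfield of `K`. -/
def pnPowers (K : Type*) [Field K] (p n : ℕ) : Subfield K :=
  Subfield.closure {x : K | ∃ y : K, y ^ p ^ n = x}

/-- `K/k` is modular: for each `n`, `K^{p^n}` and `k` are linearly disjoint over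
`K^{p^n} ∩ k`, i.e. every finite family of elements of `K^{p^n}` that is linearly
independent over `K^{p^n} ∩ k` remains linearly independent over `k`. -/
def Modular (k K : Type*) [Field k] [Field K] [Algebra k K] (p : ℕ) : Prop :=
  ∀ n : ℕ, ∀ s : Finset K, (↑s : Set K) ⊆ (pnPowers K p n : Set K) →
    LinearIndependent ↥(pnPowers K p n ⊓ (algebraMap k K).fieldRange)
      (fun x : s => (x : K)) →
    LinearIndependent ↥((algebraMap k K).fieldRange) (fun x : s => (x : K))

/-- The exponent `o(a, F)` of `a` over an intermediate field `F`:
the least `m` with `a^{p^m} ∈ F`. -/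
def expOf {k K : Type*} [Field k] [Field K] [Algebra k K] (p : ℕ)
    (F : IntermediateField k K) (a : K) : ℕ :=
  sInf {m : ℕ | a ^ p ^ m ∈ F}

/-- An intermediate field `L` of `K/k` is equiexponential of exponent `e` over `k`:
there is an `r`-basis `G` of `L/k` with `o(a, k(G \ {a})) = o(a, k) = e` for all `a ∈ G`. -/
def EquiExpOf {k K : Type*} [Field k] [Field K] [Algebra k K] (p : ℕ)
    (e : ℕ) (L : IntermediateField k K) : Prop :=
  ∃ G : Set K, RBasisRel p ⊥ L G ∧
    ∀ a ∈ G, expOf p (adjoin k (G \ {a})) a = e ∧ expOf p (⊥ : IntermediateField k K) a = e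

end

/-!
If `x ^ p ∈ F` and `x ∉ F`, then `[F(x) : F] = p` is prime, so every `y ∈ F(x) \ F` already
generates `F(x)`. Over `L = k(K^p)` this is the Steinitz exchange property for the operator
`S ↦ L(S)`: the `r`-free sets are the independent sets of a finitary matroid on `K` whose bases
are exactly the `r`-bases, and bases of a finitary matroid are equinumerous.
-/

open IntermediateField Module Polynomial

section Exchange

variable {p : ℕ} [hp : Fact p.Prime] {E K : Type*} [Field E] [Field K] [Algebra E K] [CharP K p]

theorem minpoly_eq_X_pow_sub_C_of_notMem_bot {x : K} {a : E} (ha : algebraMap E K a = x ^ p)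
    (hx : x ∉ (⊥ : IntermediateField E K)) : minpoly E x = X ^ p - C a := by
  have hirr : Irreducible (X ^ p - C a) := by
    refine X_pow_sub_C_irreducible_of_prime hp.out fun b hb => hx ?_
    have : algebraMap E K b = x :=
      frobenius_inj K p (by rw [frobenius_def, frobenius_def, ← map_pow, hb, ha])
    exact this ▸ IntermediateField.algebraMap_mem _ b
  refine (minpoly.eq_of_irreducible_of_monic hirr ?_ (monic_X_pow_sub_C a hp.out.ne_zero)).symm
  simp [ha]

theorem finrank_adjoin_simple_of_pow_eq {x : K} {a : E} (ha : algebraMap E K a = x ^ p)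
    (hx : x ∉ (⊥ : IntermediateField E K)) : finrank E E⟮x⟯ = p := by
  have hint : IsIntegral E x := .of_pow hp.out.pos (ha ▸ isIntegral_algebraMap)
  rw [adjoin.finrank hint, minpoly_eq_X_pow_sub_C_of_notMem_bot ha hx, natDegree_X_pow_sub_C]

theorem mem_adjoin_simple_exchange {x y : K} {a : E} (ha : algebraMap E K a = x ^ p)
    (hy : y ∈ E⟮x⟯) (hyE : y ∉ (⊥ : IntermediateField E K)) : x ∈ E⟮y⟯ := by
  have hx : x ∉ (⊥ : IntermediateField E K) := fun hx =>
    hyE (adjoin_simple_eq_bot_iff.mpr hx ▸ hy)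
  have hle : E⟮y⟯ ≤ E⟮x⟯ := adjoin_simple_le_iff.mpr hy
  have hx_rank := finrank_adjoin_simple_of_pow_eq ha hx
  have := Module.finite_of_finrank_pos (hx_rank ▸ hp.out.pos)
  have hy_rank : finrank E E⟮y⟯ = p := by
    have hdvd := hx_rank ▸ finrank_dvd_of_le_right hle
    refine ((Nat.dvd_prime hp.out).mp hdvd).resolve_left ?_
    rwa [IntermediateField.finrank_eq_one_iff, adjoin_simple_eq_bot_iff]
  rw [eq_of_le_of_finrank_eq hle (hy_rank.trans hx_rank.symm)]
  exact mem_adjoin_simple_self E x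

end Exchange

section RFree

variable {p : ℕ} [Fact p.Prime] {k K : Type*} [Field k] [Field K] [Algebra k K] [CharP K p]
  {L : IntermediateField k K}

theorem mem_adjoin_insert_iff_mem_adjoin_simple (S : Set K) (x y : K) :
    y ∈ adjoin L (insert x S) ↔ y ∈ (adjoin L S)⟮x⟯ := by
  rw [← Set.union_singleton, ← adjoin_adjoin_left, mem_restrictScalars]

theorem mem_adjoin_insert_exchange (hL : ∀ x : K, x ^ p ∈ L) {S : Set K} {x y : K}
    (hy : y ∈ adjoin L (insert x S)) (hyS : y ∉ adjoin L S) : x ∈ adjoin L (insert y S) := by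
  rw [mem_adjoin_insert_iff_mem_adjoin_simple] at hy ⊢
  have hxp : x ^ p ∈ adjoin L S := IntermediateField.algebraMap_mem (adjoin L S) ⟨x ^ p, hL x⟩
  refine mem_adjoin_simple_exchange (a := ⟨x ^ p, hxp⟩) rfl hy ?_
  rw [mem_bot]
  rintro ⟨z, rfl⟩
  exact hyS z.2

theorem RFreeOver.mono {I J : Set K} (hJ : RFreeOver L J) (hIJ : I ⊆ J) : RFreeOver L I :=
  fun x hx hxI => hJ x (hIJ hx) (adjoin.mono _ _ _ (Set.sdiff_subset_sdiff_left hIJ) hxI)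

theorem RFreeOver.insert_of_notMem_adjoin (hL : ∀ x : K, x ^ p ∈ L) {I : Set K} {x : K}
    (hI : RFreeOver L I) (hx : x ∉ adjoin L I) : RFreeOver L (insert x I) := by
  have hxI : x ∉ I := fun h => hx (subset_adjoin _ _ h)
  rintro y (rfl | hyI) hy
  · rw [Set.insert_sdiff_self_of_notMem hxI] at hy
    exact hx hy
  · have hyx : x ≠ y := by rintro rfl; exact hxI hyI
    rw [← Set.insert_sdiff_singleton_comm hyx] at hy
    have := mem_adjoin_insert_exchange hL hy (hI y hyI)
    rw [Set.insert_sdiff_singleton, Set.insert_eq_of_mem hyI] at this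
    exact hx this

theorem rFreeOver_of_forall_finite {I : Set K} (h : ∀ J ⊆ I, J.Finite → RFreeOver L J) :
    RFreeOver L I := by
  intro x hx hxI
  obtain ⟨T, hTI, hxT⟩ := exists_finset_of_mem_adjoin hxI
  have hxT' : x ∉ (T : Set K) := fun h => (hTI h).2 rfl
  refine h (insert x T) (Set.insert_subset hx (hTI.trans Set.sdiff_subset))
    (T.finite_toSet.insert x) x (Set.mem_insert _ _) ?_
  rwa [Set.insert_sdiff_self_of_notMem hxT']

theorem RFreeOver.maximal_of_adjoin_eq_top {B : Set K} (hB : RFreeOver L B)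
    (htop : adjoin L B = ⊤) : Maximal (RFreeOver L) B := by
  refine ⟨hB, fun J hJ hBJ x hxJ => by_contra fun hxB => hJ x hxJ ?_⟩
  exact adjoin.mono _ _ _ (Set.subset_sdiff_singleton hBJ hxB) (htop ▸ mem_top)

theorem adjoin_eq_top_of_maximal_rFreeOver (hL : ∀ x : K, x ^ p ∈ L) {B : Set K}
    (hB : Maximal (RFreeOver L) B) : adjoin L B = ⊤ := by
  refine eq_top_iff.mpr fun x _ => by_contra fun hx => ?_
  have hxB : x ∉ B := fun h => hx (subset_adjoin _ _ h)
  exact hxB <|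
    hB.2 (hB.1.insert_of_notMem_adjoin hL hx) (Set.subset_insert _ _) (Set.mem_insert _ _)

theorem RFreeOver.exists_insert_of_not_maximal (hL : ∀ x : K, x ^ p ∈ L) {I B : Set K}
    (hI : RFreeOver L I) (hInot : ¬Maximal (RFreeOver L) I) (hB : Maximal (RFreeOver L) B) :
    ∃ x ∈ B \ I, RFreeOver L (insert x I) := by
  by_contra! h
  have hBI : B ⊆ adjoin L I := fun x hxB => by_contra fun hx =>
    h x ⟨hxB, fun hxI => hx (subset_adjoin _ _ hxI)⟩ (hI.insert_of_notMem_adjoin hL hx)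
  refine hInot (hI.maximal_of_adjoin_eq_top (eq_top_iff.mpr ?_))
  rw [← adjoin_eq_top_of_maximal_rFreeOver hL hB]
  exact adjoin_le_iff.mpr hBI

variable (L) in
def RFreeOver.matroid (hL : ∀ x : K, x ^ p ∈ L) : Matroid K :=
  (IndepMatroid.ofFinitary Set.univ (RFreeOver L) (fun _ hx => hx.elim)
    (fun _ _ hJ hIJ => hJ.mono hIJ)
    (fun _ _ hI hInot hB => hI.exists_insert_of_not_maximal hL hInot hB)
    (fun _ h => rFreeOver_of_forall_finite h) (fun _ _ => Set.subset_univ _)).matroid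

instance (hL : ∀ x : K, x ^ p ∈ L) : (RFreeOver.matroid L hL).Finitary :=
  IndepMatroid.ofFinitary_finitary ..

theorem RFreeOver.matroid_isBase_iff (hL : ∀ x : K, x ^ p ∈ L) {B : Set K} :
    (RFreeOver.matroid L hL).IsBase B ↔ adjoin L B = ⊤ ∧ RFreeOver L B := by
  rw [Matroid.isBase_iff_maximal_indep]
  exact ⟨fun hB => ⟨adjoin_eq_top_of_maximal_rFreeOver hL hB, hB.1⟩,
    fun hB => hB.2.maximal_of_adjoin_eq_top hB.1⟩

end RFree

/-- Any two `r`-bases of `K/k` have the same cardinality. -/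
theorem rBasis_card_eq
    (p : ℕ) [Fact p.Prime] (k K : Type*) [Field k] [Field K] [Algebra k K] [CharP k p]
    (B₁ B₂ : Set K) (h₁ : RBasis k K p B₁) (h₂ : RBasis k K p B₂) :
    Cardinal.mk B₁ = Cardinal.mk B₂ := by
  have : CharP K p := charP_of_injective_algebraMap (algebraMap k K).injective p
  have hL : ∀ x : K, x ^ p ∈ pClosure k K p := fun x => subset_adjoin _ _ ⟨x, rfl⟩
  exact ((RFreeOver.matroid_isBase_iff hL).mpr h₁).cardinalMk_eq
    ((RFreeOver.matroid_isBase_iff hL).mpr h₂)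
end

section
/- Let K/k be a purely inseparable field extension of characteristic p > 0 of finite exponent (i.e., K^{p^e} ⊆ k for some e). Then a subset B of K is an r-basis of K/k if and only if B is a minimal generating set of K over k (i.e., K = k(B) and x ∉ k(B \ {x}) for all x ∈ B). -/
/-!
Common definitions: purely inseparable extension theory (r-bases, degree of
irrationality, relative perfect closure, modularity), following Fliouet,
"Extensions absolument lq-finies".
-/

open IntermediateField

section Aux

variable {p : ℕ} [Fact p.Prime] {k K : Type*} [Field k] [Field K] [Algebra k K] [CharP k p]

private lemma frob_mem_aux (S : Set K) {x : K} (h : x ∈ adjoin k S) (n : ℕ) :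
    x ^ p ^ n ∈ adjoin k ((· ^ p ^ n) '' S) := by
  haveI : CharP K p := charP_of_injective_algebraMap (algebraMap k K).injective p
  haveI : ExpChar K p := ExpChar.prime Fact.out
  induction h using IntermediateField.adjoin_induction with
  | mem a ha => exact subset_adjoin _ _ ⟨a, ha, rfl⟩
  | algebraMap r => rw [← map_pow]; exact IntermediateField.algebraMap_mem _ _
  | add a b _ _ ha hb => rw [add_pow_char_pow]; exact add_mem ha hb
  | inv a _ ha => rw [inv_pow]; exact inv_mem ha
  | mul a b _ _ ha hb => rw [mul_pow]; exact mul_mem ha hb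

omit [Fact (Nat.Prime p)] [CharP k p] in
private lemma mem_adjoin_pClosure_iff (S : Set K) (x : K) :
    x ∈ adjoin (pClosure k K p) S ↔
      x ∈ adjoin k ({y : K | ∃ z : K, z ^ p = y} ∪ S) := by
  rw [← IntermediateField.adjoin_adjoin_left k {y : K | ∃ z : K, z ^ p = y} S]
  rfl

end Aux

/-- For a purely inseparable extension of finite exponent, `B` is an
`r`-basis of `K/k` iff `B` is a minimal generating set of `K` over `k`. -/
theorem rBasis_iff_minimal_generator
    (p : ℕ) [Fact p.Prime] (k K : Type*) [Field k] [Field K] [Algebra k K] [CharP k p]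
    [IsPurelyInseparable k K]
    (e : ℕ) (he : ∀ x : K, x ^ p ^ e ∈ (algebraMap k K).range)
    (B : Set K) :
    RBasis k K p B ↔
      (adjoin k B = ⊤ ∧ ∀ x ∈ B, x ∉ adjoin k (B \ {x})) := by
  classical
  set P : Set K := {y : K | ∃ z : K, z ^ p = y} with hP
  set Pn : ℕ → Set K := fun n => {y : K | ∃ z : K, z ^ p ^ n = y} with hPn
  constructor
  · rintro ⟨htop, hfree⟩
    constructor
    · -- adjoin k (P ∪ B) = ⊤, deduce adjoin k B = ⊤
      have h1 : adjoin k (P ∪ B) = ⊤ := by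
        rw [eq_top_iff]
        intro x _
        rw [← mem_adjoin_pClosure_iff, htop]
        trivial
      have key : ∀ n : ℕ, adjoin k (Pn (n + 1) ∪ B) = ⊤ := by
        intro n
        induction n with
        | zero =>
          have : Pn 1 = P := by
            ext y; simp only [hPn, hP, Set.mem_setOf_eq, pow_one]
          rwa [this]
        | succ n ih =>
          rw [eq_top_iff, ← h1]
          rw [adjoin_le_iff]
          rintro a (⟨z, rfl⟩ | haB)
          · -- z ^ p ∈ adjoin k (Pn (n+2) ∪ B)
            have hz : z ∈ adjoin k (Pn (n + 1) ∪ B) := by rw [ih]; trivial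
            have := frob_mem_aux (p := p) _ hz 1
            rw [pow_one] at this
            refine SetLike.le_def.mp (adjoin_le_iff.mpr ?_) this
            rintro _ ⟨b, (⟨y, rfl⟩ | hbB), rfl⟩
            · beta_reduce
              refine subset_adjoin _ _ (Or.inl ⟨y, ?_⟩)
              rw [← pow_mul, ← pow_succ]
            · beta_reduce
              exact pow_mem (show b ∈ adjoin k _ from subset_adjoin _ _ (Or.inr hbB)) p
          · exact subset_adjoin _ _ (Or.inr haB)
      have := key e
      rw [eq_top_iff, ← this, adjoin_le_iff]
      rintro a (⟨z, rfl⟩ | haB)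
      · obtain ⟨c, hc⟩ := he (z ^ p)
        have : z ^ p ^ (e + 1) = algebraMap k K c := by
          rw [pow_succ', pow_mul, hc]
        rw [this]
        exact IntermediateField.algebraMap_mem _ _
      · exact subset_adjoin _ _ haB
    · intro x hx hmem
      exact hfree x hx (by
        rw [mem_adjoin_pClosure_iff]
        exact SetLike.le_def.mp (adjoin.mono _ _ _ Set.subset_union_right) hmem)
  · rintro ⟨htop, hfree⟩
    constructor
    · rw [eq_top_iff]
      intro x _
      rw [mem_adjoin_pClosure_iff]
      have : x ∈ adjoin k B := by rw [htop]; trivial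
      exact SetLike.le_def.mp (adjoin.mono _ _ _ Set.subset_union_right) this
    · intro x hx hmem
      apply hfree x hx
      rw [mem_adjoin_pClosure_iff] at hmem
      set B' : Set K := B \ {x} with hB'
      -- Step 1 : x ∈ adjoin k (B' ∪ {x ^ p})
      have hPsub : P ⊆ (adjoin k (B' ∪ {x ^ p}) : Set K) := by
        rintro _ ⟨z, rfl⟩
        have hz : z ∈ adjoin k (B' ∪ {x}) := by
          have : z ∈ adjoin k B := by rw [htop]; trivial
          refine SetLike.le_def.mp (adjoin.mono _ _ _ ?_) this
          intro b hb
          by_cases hbx : b = x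
          · exact Or.inr (hbx ▸ rfl)
          · exact Or.inl ⟨hb, hbx⟩
        have := frob_mem_aux (p := p) _ hz 1
        rw [pow_one] at this
        refine SetLike.le_def.mp (adjoin_le_iff.mpr ?_) this
        rintro _ ⟨b, (hbB' | hbx), rfl⟩
        · beta_reduce
          exact pow_mem (show b ∈ adjoin k _ from subset_adjoin _ _ (Or.inl hbB')) p
        · rw [Set.mem_singleton_iff] at hbx
          subst hbx
          beta_reduce
          exact subset_adjoin _ _ (Or.inr rfl)
      have hbase : x ∈ adjoin k (B' ∪ {x ^ p ^ 1}) := by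
        rw [pow_one]
        refine SetLike.le_def.mp (adjoin_le_iff.mpr ?_) hmem
        rintro a (haP | haB')
        · exact hPsub haP
        · exact subset_adjoin _ _ (Or.inl haB')
      -- Step 2 : by induction x ∈ adjoin k (B' ∪ {x ^ p ^ (n+1)})
      have key : ∀ n : ℕ, x ∈ adjoin k (B' ∪ {x ^ p ^ (n + 1)}) := by
        intro n
        induction n with
        | zero => exact hbase
        | succ n ih =>
          have hxpn : x ^ p ^ (n + 1) ∈ adjoin k (B' ∪ {x ^ p ^ (n + 2)}) := by
            have := frob_mem_aux (p := p) _ hbase (n + 1)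
            rw [pow_one] at this
            refine SetLike.le_def.mp (adjoin_le_iff.mpr ?_) this
            rintro _ ⟨b, (hbB' | hbx), rfl⟩
            · beta_reduce
              exact pow_mem (show b ∈ adjoin k _ from subset_adjoin _ _ (Or.inl hbB')) _
            · rw [Set.mem_singleton_iff] at hbx
              subst hbx
              beta_reduce
              refine subset_adjoin _ _ (Or.inr ?_)
              rw [Set.mem_singleton_iff, ← pow_mul, ← pow_succ']
          refine SetLike.le_def.mp (adjoin_le_iff.mpr ?_) ih
          rintro a (haB' | hax)
          · exact subset_adjoin _ _ (Or.inl haB')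
          · rw [Set.mem_singleton_iff] at hax
            exact hax ▸ hxpn
      have := key e
      refine SetLike.le_def.mp (adjoin_le_iff.mpr ?_) this
      rintro a (haB' | hax)
      · exact subset_adjoin _ _ haB'
      · rw [Set.mem_singleton_iff] at hax
        subst hax
        obtain ⟨c, hc⟩ := he x
        have : x ^ p ^ (e + 1) = algebraMap k K (c ^ p) := by
          rw [pow_succ, pow_mul, ← hc, ← map_pow]
        rw [this]
        exact IntermediateField.algebraMap_mem _ _
end

section
/- Let k ⊆ L ⊆ K be purely inseparable extensions of characteristic p > 0 with K/k of finite exponent. If B_L and B_K are r-bases of L/k and K/k respectively, then |B_L| ≤ |B_K|. -/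
/-!
Common definitions: purely inseparable extension theory (r-bases, degree of
irrationality, relative perfect closure, modularity), following Fliouet,
"Extensions absolument lq-finies".
-/

open IntermediateField

/-!
Because `K/k` has bounded exponent, an `r`-basis `B` of `K/k` generates `K` over `k`: from
`K = k(K^p, B)` one gets `K^{p^n} ⊆ k(K^{p^{n+1}}, B)` for every `n`, and `K^{p^e} ⊆ k`.

If `B_K` is finite, `K/k` is finite. Adjoining the elements of an `r`-basis one at a time to
`k(K^p)` multiplies the degree by `p` each time, so `[K : k(K^p)] = p^|B_K|`, and likewise
`[L : k(L^p)] = p^|B_L|`. Frobenius is additive, so it carries an `L`-basis of `K` to a spanning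
set of `k(K^p)` over `k(L^p)`; thus `[k(K^p) : k(L^p)] ≤ [K : L]`, which rearranges to
`[L : k(L^p)] ≤ [K : k(K^p)]`.

If `B_K` is infinite, then `|B_L| ≤ dim_k L ≤ dim_k K ≤ |B_K|`, since an `r`-basis is linearly
independent and `K` is spanned by the monomials in `B_K`.
-/

open Module Polynomial

section PowerAdjunction

variable {p : ℕ} [Fact p.Prime] {F K : Type*} [Field F] [Field K] [Algebra F K] [CharP K p]

theorem finrank_adjoin_simple_eq_of_pow_mem {x : K} (hxp : x ^ p ∈ (algebraMap F K).range)
    (hx : x ∉ (algebraMap F K).range) : finrank F F⟮x⟯ = p := by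
  have hp : p.Prime := Fact.out
  obtain ⟨c, hc⟩ := hxp
  have hroot : aeval x (X ^ p - C c) = 0 := by simp [hc]
  have hirr : Irreducible (X ^ p - C c) := by
    refine X_pow_sub_C_irreducible_of_prime hp fun b hb => hx ⟨b, frobenius_inj K p ?_⟩
    simp [frobenius_def, ← map_pow, hb, hc]
  rw [adjoin.finrank ⟨_, monic_X_pow_sub_C c hp.ne_zero, hroot⟩,
    ← minpoly.eq_of_irreducible_of_monic hirr hroot (monic_X_pow_sub_C c hp.ne_zero),
    natDegree_X_pow_sub_C]

theorem finrank_adjoin_eq_pow_ncard {B : Set K} (hB : B.Finite)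
    (hpow : ∀ x ∈ B, x ^ p ∈ (algebraMap F K).range)
    (hfree : ∀ x ∈ B, x ∉ adjoin F (B \ {x})) :
    finrank F (adjoin F B) = p ^ B.ncard := by
  refine Set.Finite.induction_on_subset
    (motive := fun t _ => finrank F (adjoin F t) = p ^ t.ncard) B hB (by simp)
    fun {a t} haB htB hat ih => ?_
  set E := adjoin F t
  have haE : a ∉ (algebraMap E K).range := by
    have htB' : t ⊆ B \ {a} := fun z hz => ⟨htB hz, by rintro rfl; exact hat hz⟩
    rintro ⟨y, rfl⟩
    exact hfree _ haB (adjoin.mono F t _ htB' y.2)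
  have hapE : a ^ p ∈ (algebraMap E K).range := by
    obtain ⟨c, hc⟩ := hpow a haB
    exact ⟨algebraMap F E c, hc⟩
  rw [Set.ncard_insert_of_notMem hat (hB.subset htB), pow_succ, ← ih, Set.insert_eq,
    Set.union_comm, ← adjoin_adjoin_left, ← finrank_adjoin_simple_eq_of_pow_mem hapE haE]
  exact (Module.finrank_mul_finrank F E E⟮a⟯).symm

end PowerAdjunction

section RBasis

variable {p : ℕ} {k K : Type*} [Field k] [Field K] [Algebra k K]

theorem RFreeOver.linearIndependent {F : IntermediateField k K} {B : Set K}
    (hB : RFreeOver F B) : LinearIndependent F ((↑) : B → K) := by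
  rw [linearIndependent_iff_notMem_span]
  intro x hx
  refine hB x x.2 ?_
  have hspan : Submodule.span F ((↑) '' (Set.univ \ {x}) : Set K) ≤
      Subalgebra.toSubmodule (adjoin F (B \ {(x : K)})).toSubalgebra := by
    rw [Submodule.span_le]
    rintro _ ⟨y, hy, rfl⟩
    exact subset_adjoin F _ ⟨y.2, fun h => hy.2 (Subtype.ext h)⟩
  exact hspan hx

theorem RBasis.linearIndependent {B : Set K} (hB : RBasis k K p B) :
    LinearIndependent k ((↑) : B → K) :=
  hB.2.linearIndependent.restrict_scalars' k

theorem RBasis.finrank_eq_pow_ncard [Fact p.Prime] [CharP K p] {B : Set K}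
    (hB : RBasis k K p B) (hfin : B.Finite) : finrank (pClosure k K p) K = p ^ B.ncard := by
  rw [← finrank_top', ← hB.1]
  exact finrank_adjoin_eq_pow_ncard hfin
    (fun x _ => ⟨⟨x ^ p, subset_adjoin _ _ ⟨x, rfl⟩⟩, rfl⟩) hB.2

def powPreimage (p : ℕ) [ExpChar K p] (n : ℕ) (T : IntermediateField k K) :
    IntermediateField k K :=
  (T.toSubfield.comap (iterateFrobenius K p n)).toIntermediateField fun c => by
    simp [iterateFrobenius_def, ← map_pow]

theorem mem_powPreimage [ExpChar K p] {n : ℕ} {T : IntermediateField k K} {x : K} :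
    x ∈ powPreimage p n T ↔ x ^ p ^ n ∈ T :=
  Iff.rfl

theorem pow_mem_adjoin_of_pow_succ_mem [ExpChar K p] {B : Set K}
    (hgen : adjoin (pClosure k K p) B = ⊤) {n : ℕ}
    (h : ∀ y : K, y ^ p ^ (n + 1) ∈ adjoin k B) (x : K) : x ^ p ^ n ∈ adjoin k B := by
  suffices ⊤ ≤ powPreimage p n (adjoin k B) from mem_powPreimage.1 (this trivial)
  rw [← restrictScalars_top (K := k) (F := pClosure k K p), ← hgen,
    restrictScalars_adjoin_eq_sup]
  refine sup_le (adjoin_le_iff.2 ?_) (adjoin_le_iff.2 fun b hb => ?_)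
  · rintro _ ⟨y, rfl⟩
    rw [SetLike.mem_coe, mem_powPreimage, ← pow_mul, ← pow_succ']
    exact h y
  · exact mem_powPreimage.2 (pow_mem (subset_adjoin k B hb) _)

theorem adjoin_eq_top_of_adjoin_pClosure_eq_top [ExpChar K p] {B : Set K}
    (hgen : adjoin (pClosure k K p) B = ⊤) {e : ℕ}
    (he : ∀ x : K, x ^ p ^ e ∈ (algebraMap k K).range) : adjoin k B = ⊤ := by
  have hk : ∀ y : K, y ^ p ^ e ∈ adjoin k B := fun y => by
    obtain ⟨c, hc⟩ := he y
    exact hc ▸ IntermediateField.algebraMap_mem _ c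
  suffices ∀ n, (∀ y : K, y ^ p ^ n ∈ adjoin k B) → ∀ y, y ∈ adjoin k B from
    eq_top_iff.2 fun y _ => this e hk y
  intro n
  induction n with
  | zero => simp
  | succ n ih => exact fun h => ih (pow_mem_adjoin_of_pow_succ_mem hgen h)

end RBasis

section Tower

variable {p : ℕ} {k L K : Type*} [Field k] [Field L] [Field K] [Algebra k L] [Algebra L K]
  [Algebra k K] [IsScalarTower k L K]

theorem map_pClosure_le :
    (pClosure k L p).map (IsScalarTower.toAlgHom k L K) ≤ pClosure k K p := by
  rw [pClosure, adjoin_map]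
  refine adjoin_le_iff.2 ?_
  rintro _ ⟨_, ⟨y, rfl⟩, rfl⟩
  exact subset_adjoin _ _ ⟨_, (map_pow _ y p).symm⟩

theorem pow_mem_span_pow_basis [Fact p.Prime] [CharP K p] {ι : Type*} [Fintype ι]
    (b : Basis ι L K) (y : K) :
    y ^ p ∈ Submodule.span ((pClosure k L p).map (IsScalarTower.toAlgHom k L K))
      (Set.range fun i => b i ^ p) := by
  rw [← b.sum_repr y, sum_pow_char]
  refine Submodule.sum_mem _ fun i _ => ?_
  rw [Algebra.smul_def, mul_pow, ← map_pow]
  have hc : algebraMap L K (b.repr y i ^ p) ∈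
      (pClosure k L p).map (IsScalarTower.toAlgHom k L K) :=
    ⟨_, subset_adjoin _ _ ⟨_, rfl⟩, rfl⟩
  exact Submodule.smul_mem _ (⟨_, hc⟩ : (pClosure k L p).map (IsScalarTower.toAlgHom k L K))
    (Submodule.subset_span ⟨i, rfl⟩)

theorem relfinrank_map_pClosure_le [Fact p.Prime] [CharP K p] [FiniteDimensional k K] :
    relfinrank ((pClosure k L p).map (IsScalarTower.toAlgHom k L K)) (pClosure k K p) ≤
      finrank L K := by
  set E := (pClosure k L p).map (IsScalarTower.toAlgHom k L K)
  have : FiniteDimensional L K := .right k L K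
  let b := Module.finBasis L K
  have hEP : E ≤ adjoin k (MonoidHom.mrange (powMonoidHom p : K →* K)) := map_pClosure_le
  -- `k(K^p)` is spanned over `k(L^p)` by `K^p`, which is closed under multiplication.
  have hle : Subalgebra.toSubmodule (extendScalars hEP).toSubalgebra ≤
      Submodule.span E (Set.range fun i => b i ^ p) := by
    rw [extendScalars_adjoin, adjoin_toSubalgebra_of_isAlgebraic fun x _ =>
      Algebra.IsAlgebraic.isAlgebraic x, Algebra.adjoin_eq_span, Submonoid.closure_eq,
      Submodule.span_le]
    rintro _ ⟨y, rfl⟩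
    exact pow_mem_span_pow_basis b y
  calc relfinrank E (pClosure k K p) = finrank E (extendScalars hEP) :=
        relfinrank_eq_finrank_of_le hEP
    _ ≤ finrank E (Submodule.span E (Set.range fun i => b i ^ p)) :=
        Submodule.finrank_mono hle
    _ ≤ Fintype.card (Fin (finrank L K)) := finrank_range_le_card _
    _ = finrank L K := Fintype.card_fin _

theorem finrank_pClosure_le_of_isScalarTower [Fact p.Prime] [CharP K p]
    [FiniteDimensional k K] : finrank (pClosure k L p) L ≤ finrank (pClosure k K p) K := by
  have : FiniteDimensional k L := .left k L K
  have : FiniteDimensional L K := .right k L K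
  set E := (pClosure k L p).map (IsScalarTower.toAlgHom k L K)
  have hE : finrank k E = finrank k (pClosure k L p) :=
    (equivMap (pClosure k L p) _).toLinearEquiv.finrank_eq.symm
  have hL := Module.finrank_mul_finrank k (pClosure k L p) L
  have hK := Module.finrank_mul_finrank k (pClosure k K p) K
  have hLK := Module.finrank_mul_finrank k L K
  have hP := finrank_bot_mul_relfinrank (map_pClosure_le (k := k) (L := L) (K := K) (p := p))
  have hpos : 0 < finrank k (pClosure k L p) * finrank L K :=
    Nat.mul_pos finrank_pos finrank_pos
  refine le_of_mul_le_mul_left ?_ hpos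
  calc finrank k (pClosure k L p) * finrank L K * finrank (pClosure k L p) L
      = finrank k E * relfinrank E (pClosure k K p) * finrank (pClosure k K p) K := by
        rw [hP, hK, ← hLK, ← hL]; ring
    _ ≤ finrank k (pClosure k L p) * finrank L K * finrank (pClosure k K p) K := by
        rw [hE]; gcongr; exact relfinrank_map_pClosure_le

end Tower

theorem rank_le_mk_of_adjoin_eq_top {k K : Type*} [Field k] [Field K] [Algebra k K]
    [Algebra.IsAlgebraic k K] {B : Set K} (hB : B.Infinite) (htop : adjoin k B = ⊤) :
    Module.rank k K ≤ Cardinal.mk B := by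
  have : Algebra.adjoin k B = ⊤ := by
    rw [← adjoin_toSubalgebra_of_isAlgebraic fun x _ => Algebra.IsAlgebraic.isAlgebraic x,
      htop, top_toSubalgebra]
  calc Module.rank k K = Module.rank k (Algebra.adjoin k B) := by
        rw [this, Subalgebra.rank_top]
    _ ≤ max (Cardinal.mk B) Cardinal.aleph0 := Algebra.rank_adjoin_le B
    _ = Cardinal.mk B := max_eq_left (Cardinal.infinite_iff.1 hB.to_subtype)

/-- For `k ⊆ L ⊆ K` purely inseparable with `K/k` of finite exponent,
an `r`-basis of `L/k` has cardinality at most that of an `r`-basis of `K/k`. -/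
theorem card_rBasis_le_of_le
    (p : ℕ) [Fact p.Prime] (k K : Type*) [Field k] [Field K] [Algebra k K] [CharP k p]
    [IsPurelyInseparable k K]
    (e : ℕ) (he : ∀ x : K, x ^ p ^ e ∈ (algebraMap k K).range)
    (L : IntermediateField k K) (B_L : Set ↥L) (B_K : Set K)
    (hL : RBasis k ↥L p B_L) (hK : RBasis k K p B_K) :
    Cardinal.mk B_L ≤ Cardinal.mk B_K := by
  have : CharP K p := charP_of_injective_algebraMap (algebraMap k K).injective p
  have : CharP L p := charP_of_injective_algebraMap (algebraMap k L).injective p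
  have htop : adjoin k B_K = ⊤ := adjoin_eq_top_of_adjoin_pClosure_eq_top hK.1 he
  rcases B_K.finite_or_infinite with hfin | hinf
  · have := hfin.to_subtype
    have : FiniteDimensional k K := by
      have := finiteDimensional_adjoin (K := k) fun x (_ : x ∈ B_K) =>
        IsPurelyInseparable.isIntegral' k x
      rw [htop] at this
      exact topEquiv.toLinearEquiv.finiteDimensional
    have hLfin : B_L.Finite := hL.linearIndependent.setFinite
    rw [← Set.cast_ncard hLfin, ← Set.cast_ncard hfin, Nat.cast_le,
      ← Nat.pow_le_pow_iff_right (Fact.out : p.Prime).one_lt, ← hL.finrank_eq_pow_ncard hLfin,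
      ← hK.finrank_eq_pow_ncard hfin]
    exact finrank_pClosure_le_of_isScalarTower
  · calc Cardinal.mk B_L ≤ Module.rank k L := hL.linearIndependent.cardinal_le_rank
      _ ≤ Module.rank k K := Submodule.rank_le (Subalgebra.toSubmodule L.toSubalgebra)
      _ ≤ Cardinal.mk B_K := rank_le_mk_of_adjoin_eq_top hinf htop
end

section
/- Let K₁/k and K₂/k be purely inseparable subextensions of finite exponent of a common extension, which are k-linearly disjoint. If B₁ is an r-basis of K₁/k and B₂ is an r-basis of K₂/k, then B₁ ∪ B₂ is an r-basis of K₁(K₂)/k, and B₁ is an r-basis of K₁(K₂)/K₂. -/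
/-!
Common definitions: purely inseparable extension theory (r-bases, degree of
irrationality, relative perfect closure, modularity), following Fliouet,
"Extensions absolument lq-finies".
-/

open IntermediateField

/-!
Since `y ↦ y ^ p` is additive, `k(L^p) = k(K₁^p)(K₂^p)` for `L = K₁(K₂)`, which gives both
generation statements. For freeness, suppose `x ∈ B₁` lies in `K₂(L^p)(B₁ \ {x}) = M(K₂)` where
`M = k(K₁^p)(B₁ \ {x}) ⊆ K₁`. Write `x = a / b` with `a, b` in the `M`-span of a `k`-basis of `K₂`;
by linear disjointness that basis stays free over `K₁`, so comparing coefficients in `x b = a`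
puts `x` in `M`, contradicting the `r`-freeness of `B₁` over `k`.
-/

namespace IntermediateField

variable {k Ω : Type*} [Field k] [Field Ω] [Algebra k Ω]

theorem mem_of_mul_mem_span_of_linearIndependent {M K : IntermediateField k Ω} (hMK : M ≤ K)
    {ι : Type*} {v : ι → Ω} (hv : LinearIndependent K v) {x a b : Ω} (hx : x ∈ K)
    (ha : a ∈ Submodule.span M (Set.range v)) (hb : b ∈ Submodule.span M (Set.range v))
    (hb0 : b ≠ 0) (hxab : x * b = a) : x ∈ M := by
  obtain ⟨c, rfl⟩ := Finsupp.mem_span_range_iff_exists_finsupp.1 ha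
  obtain ⟨d, rfl⟩ := Finsupp.mem_span_range_iff_exists_finsupp.1 hb
  set f := inclusion hMK
  have hcoef : c.mapRange f (map_zero f) = (⟨x, hx⟩ : K) • d.mapRange f (map_zero f) := by
    apply hv
    simp only [Finsupp.linearCombination_apply, Finsupp.sum_smul_index, zero_smul,
      implies_true, Finsupp.sum_mapRange_index]
    change c.sum (fun i (a : M) => (a • v i : Ω)) = _
    rw [← hxab, Finsupp.mul_sum, Finsupp.sum_mapRange_index (by simp)]
    refine Finsupp.sum_congr fun i _ => ?_
    rw [mul_smul]
    rfl
  obtain ⟨i, hi⟩ : ∃ i, d i ≠ 0 := by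
    contrapose! hb0
    simp [show d = 0 from Finsupp.ext hb0]
  have hci : (c i : Ω) = x * d i := congr(($hcoef i : Ω))
  rw [eq_div_of_mul_eq (by simpa using hi) hci.symm]
  exact div_mem (c i).2 (d i).2

theorem LinearDisjoint.inf_sup_eq_of_le {A B M : IntermediateField k Ω} (H : A.LinearDisjoint B)
    (hMA : M ≤ A) : A ⊓ (M ⊔ B) = M := by
  refine le_antisymm (fun x hx => ?_) (le_inf hMA le_sup_left)
  obtain ⟨hxA, hxMB⟩ := mem_inf.1 hx
  obtain ⟨a, ha, b, hb, rfl⟩ : ∃ a ∈ Algebra.adjoin M (B : Set Ω),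
      ∃ b ∈ Algebra.adjoin M (B : Set Ω), x = a / b := by
    rw [← mem_adjoin_iff_div, ← mem_restrictScalars k, restrictScalars_adjoin]
    exact hxMB
  rcases eq_or_ne b 0 with rfl | hb0
  · simp
  let β := Module.Basis.ofVectorSpace k B
  have hBspan : (B : Set Ω) ⊆ Submodule.span k (Set.range (B.val ∘ β)) := by
    rintro y hy
    have := Submodule.mem_map_of_mem (f := B.val.toLinearMap) (β.mem_span ⟨y, hy⟩)
    rwa [Submodule.map_span, ← Set.range_comp] at this
  have hspan : Subalgebra.toSubmodule (Algebra.adjoin M (B : Set Ω)) ≤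
      Submodule.span M (Set.range (B.val ∘ β)) := by
    rw [Algebra.adjoin_eq_span]
    refine Submodule.span_le.2 fun y hy => Submodule.span_subset_span k M _ (hBspan ?_)
    exact (Submonoid.closure_le (S := B.toSubalgebra.toSubmonoid)).2 subset_rfl hy
  exact mem_of_mul_mem_span_of_linearIndependent hMA
    (H.linearIndependent_right β.linearIndependent) hxA (hspan ha) (hspan hb) hb0
    (div_mul_cancel₀ a hb0)

end IntermediateField

section

variable {k Ω : Type*} [Field k] [Field Ω] [Algebra k Ω] {p : ℕ}

theorem pClosureOf_le (L : IntermediateField k Ω) : pClosureOf p L ≤ L :=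
  adjoin_le_iff.2 fun _ ⟨_, hy, hyx⟩ => hyx ▸ pow_mem hy p

theorem pClosureOf_mono {L L' : IntermediateField k Ω} (h : L ≤ L') :
    pClosureOf p L ≤ pClosureOf p L' :=
  adjoin.mono _ _ _ fun _ ⟨y, hy, hyx⟩ => ⟨y, h hy, hyx⟩

theorem pow_mem_pClosureOf {L : IntermediateField k Ω} {y : Ω} (hy : y ∈ L) :
    y ^ p ∈ pClosureOf p L :=
  subset_adjoin _ _ ⟨y, hy, rfl⟩

theorem pClosureOf_sup [Fact p.Prime] [CharP k p] (K₁ K₂ : IntermediateField k Ω) :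
    pClosureOf p (K₁ ⊔ K₂) = pClosureOf p K₁ ⊔ pClosureOf p K₂ := by
  have : CharP Ω p := charP_of_injective_algebraMap (algebraMap k Ω).injective p
  refine le_antisymm ?_ (sup_le (pClosureOf_mono le_sup_left) (pClosureOf_mono le_sup_right))
  set T := pClosureOf p K₁ ⊔ pClosureOf p K₂
  have hle : (K₁ ⊔ K₂).toSubfield ≤ T.toSubfield.comap (frobenius Ω p) := by
    rw [sup_toSubfield]
    exact sup_le (fun y hy => le_sup_left (a := pClosureOf p K₁) (pow_mem_pClosureOf hy))
      (fun y hy => le_sup_right (a := pClosureOf p K₁) (pow_mem_pClosureOf hy))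
  rw [pClosureOf, adjoin_le_iff]
  rintro _ ⟨y, hy, rfl⟩
  exact hle hy

section RBasisRel

variable {K₁ K₂ L : IntermediateField k Ω} {B B₁ B₂ : Set Ω}

theorem RBasisRel.sup_eq (h : RBasisRel p ⊥ L B) : pClosureOf p L ⊔ adjoin k B = L := by
  simpa using h.2.1

variable [Fact p.Prime] [CharP k p]

theorem RBasisRel.notMem_sup_of_linearDisjoint (h : RBasisRel p ⊥ K₁ B)
    (H : K₁.LinearDisjoint K₂) {x : Ω} (hx : x ∈ B) :
    x ∉ pClosureOf p (K₁ ⊔ K₂) ⊔ adjoin k (B \ {x}) ⊔ K₂ := by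
  set M := pClosureOf p K₁ ⊔ adjoin k (B \ {x})
  have hMK₁ : M ≤ K₁ := sup_le (pClosureOf_le K₁) (adjoin_le_iff.2 (Set.sdiff_subset.trans h.1))
  have hle : pClosureOf p (K₁ ⊔ K₂) ⊔ adjoin k (B \ {x}) ⊔ K₂ ≤ M ⊔ K₂ := by
    rw [pClosureOf_sup, sup_right_comm _ (pClosureOf p K₂), sup_assoc _ (pClosureOf p K₂),
      sup_of_le_right (pClosureOf_le K₂)]
  intro hxN
  have hxM : x ∈ M := (H.inf_sup_eq_of_le hMK₁).le ⟨h.1 hx, hle hxN⟩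
  exact h.2.2 x hx (by rwa [bot_sup_eq])

theorem RBasisRel.sup_of_linearDisjoint (h : RBasisRel p ⊥ K₁ B) (H : K₁.LinearDisjoint K₂) :
    RBasisRel p K₂ (K₁ ⊔ K₂) B := by
  refine ⟨h.1.trans (SetLike.coe_subset_coe.2 le_sup_left), ?_, fun x hx => ?_⟩
  · rw [pClosureOf_sup, sup_comm (pClosureOf p K₁), ← sup_assoc,
      sup_of_le_left (pClosureOf_le K₂), sup_assoc, h.sup_eq, sup_comm]
  · rw [sup_assoc, sup_comm]
    exact h.notMem_sup_of_linearDisjoint H hx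

theorem RBasisRel.union_of_linearDisjoint (h₁ : RBasisRel p ⊥ K₁ B₁) (h₂ : RBasisRel p ⊥ K₂ B₂)
    (H : K₁.LinearDisjoint K₂) : RBasisRel p ⊥ (K₁ ⊔ K₂) (B₁ ∪ B₂) := by
  refine ⟨Set.union_subset (h₁.1.trans (SetLike.coe_subset_coe.2 le_sup_left))
    (h₂.1.trans (SetLike.coe_subset_coe.2 le_sup_right)), ?_, ?_⟩
  · rw [bot_sup_eq, pClosureOf_sup, adjoin_union, sup_sup_sup_comm, h₁.sup_eq, h₂.sup_eq]
  · rintro x (hx | hx) hxN <;> rw [bot_sup_eq, Set.union_sdiff_distrib, adjoin_union] at hxN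
    · refine h₁.notMem_sup_of_linearDisjoint H hx ?_
      rw [← sup_assoc] at hxN
      exact sup_le_sup_left (adjoin_le_iff.2 (Set.sdiff_subset.trans h₂.1)) _ hxN
    · have hfree := h₂.notMem_sup_of_linearDisjoint H.symm hx
      rw [sup_comm K₂ K₁] at hfree
      refine hfree ?_
      rw [sup_comm (adjoin k _), ← sup_assoc] at hxN
      exact sup_le_sup_left (adjoin_le_iff.2 (Set.sdiff_subset.trans h₁.1)) _ hxN

end RBasisRel

end

theorem rBasis_sup_of_linearDisjoint_general
    (p : ℕ) [Fact p.Prime] (k Ω : Type*) [Field k] [Field Ω] [Algebra k Ω] [CharP k p]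
    (K₁ K₂ : IntermediateField k Ω)
    (hdisj : K₁.LinearDisjoint ↥K₂)
    (B₁ B₂ : Set Ω) (h₁ : RBasisRel p ⊥ K₁ B₁) (h₂ : RBasisRel p ⊥ K₂ B₂) :
    RBasisRel p ⊥ (K₁ ⊔ K₂) (B₁ ∪ B₂) ∧ RBasisRel p K₂ (K₁ ⊔ K₂) B₁ :=
  ⟨h₁.union_of_linearDisjoint h₂ hdisj, h₁.sup_of_linearDisjoint hdisj⟩

/-- If `K₁/k`, `K₂/k` are `k`-linearly disjoint purely inseparable
subextensions of finite exponent, `B₁` an `r`-basis of `K₁/k` and `B₂` an `r`-basis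
of `K₂/k`, then `B₁ ∪ B₂` is an `r`-basis of `K₁(K₂)/k` and `B₁` is an `r`-basis of
`K₁(K₂)/K₂`. -/
theorem rBasis_sup_of_linearDisjoint
    (p : ℕ) [Fact p.Prime] (k Ω : Type*) [Field k] [Field Ω] [Algebra k Ω] [CharP k p]
    [IsPurelyInseparable k Ω]
    (K₁ K₂ : IntermediateField k Ω)
    (e₁ : ℕ) (he₁ : ∀ x ∈ K₁, x ^ p ^ e₁ ∈ (algebraMap k Ω).range)
    (e₂ : ℕ) (he₂ : ∀ x ∈ K₂, x ^ p ^ e₂ ∈ (algebraMap k Ω).range)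
    (hdisj : K₁.LinearDisjoint ↥K₂)
    (B₁ B₂ : Set Ω) (h₁ : RBasisRel p ⊥ K₁ B₁) (h₂ : RBasisRel p ⊥ K₂ B₂) :
    RBasisRel p ⊥ (K₁ ⊔ K₂) (B₁ ∪ B₂) ∧ RBasisRel p K₂ (K₁ ⊔ K₂) B₁ :=
  rBasis_sup_of_linearDisjoint_general p k Ω K₁ K₂ hdisj B₁ B₂ h₁ h₂
end

section
/- Let K/k be a purely inseparable extension of characteristic p > 0 that is relatively perfect (k(K^p) = K). Then for every intermediate field L of K/k, if K/L is a finite extension then L = K. -/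
/-!
Common definitions: purely inseparable extension theory (r-bases, degree of
irrationality, relative perfect closure, modularity), following Fliouet,
"Extensions absolument lq-finies".
-/

open IntermediateField

/-! Since `K/L` is algebraic, `K = L(K^p)` is the `L`-span of the `p`-th powers, and pushing this
through Frobenius shows that `K` is the `L`-span of `K^{p^n}` for every `n`. A finite purely
inseparable extension has bounded exponent, so `K^{p^n} ⊆ L` for large `n`, hence `K = L`. -/

theorem Algebra.toSubmodule_adjoin_range_pow (R : Type*) {A : Type*} [CommSemiring R]
    [CommSemiring A] [Algebra R A] (n : ℕ) :
    Subalgebra.toSubmodule (Algebra.adjoin R (Set.range (· ^ n : A → A))) =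
      Submodule.span R (Set.range (· ^ n : A → A)) := by
  rw [Algebra.adjoin_eq_span]
  exact congrArg (Submodule.span R ∘ SetLike.coe)
    (MonoidHom.mrange (powMonoidHom n : A →* A)).closure_eq

theorem IntermediateField.span_range_pow_eq_top_of_adjoin_eq_top {F E : Type*} [Field F]
    [Field E] [Algebra F E] [Algebra.IsAlgebraic F E] {n : ℕ}
    (h : adjoin F (Set.range (· ^ n : E → E)) = ⊤) :
    Submodule.span F (Set.range (· ^ n : E → E)) = ⊤ := by
  rw [← Algebra.toSubmodule_adjoin_range_pow, ← adjoin_toSubalgebra, h, top_toSubalgebra,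
    Algebra.top_toSubmodule]

theorem Submodule.span_range_pow_pow_eq_top {R A : Type*} [CommSemiring R] [CommSemiring A]
    [Algebra R A] {p : ℕ} [ExpChar R p] [ExpChar A p]
    (h : Submodule.span R (Set.range (· ^ p : A → A)) = ⊤) (n : ℕ) :
    Submodule.span R (Set.range (· ^ p ^ n : A → A)) = ⊤ := by
  induction n with
  | zero => simp
  | succ n ih =>
    refine eq_top_iff.mpr (h ▸ Submodule.span_le.mpr ?_)
    rintro _ ⟨x, rfl⟩
    have hx : x ^ p ∈ LinearMap.frobenius R A p ''
        Submodule.span R (Set.range (· ^ p ^ n : A → A)) :=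
      ⟨x, by rw [ih]; exact Submodule.mem_top, rfl⟩
    have hrange : Set.range (· ^ p ^ (n + 1) : A → A) =
        LinearMap.frobenius R A p '' Set.range (· ^ p ^ n) := by
      rw [← Set.range_comp]
      ext
      simp [LinearMap.frobenius_def, pow_succ, pow_mul]
    exact hrange ▸ Submodule.image_span_subset_span _ _ hx

theorem IsPurelyInseparable.finrank_eq_one_of_span_range_pow_eq_top {F E : Type*} [Field F]
    [Field E] [Algebra F E] [FiniteDimensional F E] [IsPurelyInseparable F E]
    (p : ℕ) [ExpChar F p] (h : Submodule.span F (Set.range (· ^ p : E → E)) = ⊤) :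
    Module.finrank F E = 1 := by
  have : ExpChar E p := expChar_of_injective_algebraMap (algebraMap F E).injective p
  have hle : Submodule.span F (Set.range (· ^ p ^ exponent F E : E → E)) ≤
      Subalgebra.toSubmodule ⊥ := by
    refine Submodule.span_le.mpr ?_
    rintro _ ⟨x, rfl⟩
    exact Algebra.mem_bot.mpr (exponent_def' F p x)
  refine Subalgebra.bot_eq_top_iff_finrank_eq_one.mp (eq_top_iff.mpr fun x _ => ?_)
  exact hle (Submodule.span_range_pow_pow_eq_top h _ ▸ Submodule.mem_top)

/-- If `K/k` is purely inseparable and relatively perfect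
(`k(K^p) = K`), then any intermediate field `L` with `K/L` finite equals `K`. -/
theorem eq_top_of_finiteDimensional_of_relativelyPerfect
    (p : ℕ) [Fact p.Prime] (k K : Type*) [Field k] [Field K] [Algebra k K] [CharP k p]
    [IsPurelyInseparable k K]
    (hrp : pClosure k K p = ⊤)
    (L : IntermediateField k K) (hfin : FiniteDimensional ↥L K) :
    L = ⊤ := by
  have : CharP L p := charP_of_injective_algebraMap (algebraMap k L).injective p
  refine finrank_eq_one_iff_eq_top.mp
    (IsPurelyInseparable.finrank_eq_one_of_span_range_pow_eq_top p ?_)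
  exact span_range_pow_eq_top_of_adjoin_eq_top (adjoin_eq_top_of_adjoin_eq_top k hrp)
end

section
/- Let K/k be a purely inseparable extension of characteristic p > 0 that is both modular and lq-finite. Then K/k is q-finite, i.e., di(K/k) is finite. -/
/-!
Common definitions: purely inseparable extension theory (r-bases, degree of
irrationality, relative perfect closure, modularity), following Fliouet,
"Extensions absolument lq-finies".
-/

open IntermediateField

/-!
Fix `n ≥ 1` and put `L = k^{p^{-n}} ∩ K`, `M = k^{p^{-1}} ∩ L = k^{p^{-1}} ∩ K`. The map
`x ↦ x^p` sends `M` onto `K^p ∩ k`, so it carries an `M`-basis of `L` to a family in `k(L^p)`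
that is linearly independent over `K^p ∩ k`, hence over `k` by modularity. Thus
`[L : M] ≤ [k(L^p) : k]`, which rearranges to `[L : k(L^p)] ≤ [M : k]`. Finally, a minimal
generating subset of a `k(L^p)`-basis of `L` is an r-basis, so `di(L/k) ≤ [k^{p^{-1}} ∩ K : k]`
for every `n`, and this bound is finite by lq-finiteness.
-/

open Module

theorem finrank_le_finrank_of_finrank_le_finrank {k L : Type*} [Field k] [Field L] [Algebra k L]
    [FiniteDimensional k L] {E M : IntermediateField k L} (h : finrank M L ≤ finrank k E) :
    finrank E L ≤ finrank k M := by
  refine Nat.le_of_mul_le_mul_left ?_ (finrank_pos (R := k) (M := E))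
  calc finrank k E * finrank E L = finrank k M * finrank M L :=
        (finrank_mul_finrank k E L).trans (finrank_mul_finrank k M L).symm
    _ ≤ finrank k M * finrank k E := Nat.mul_le_mul_left _ h
    _ = finrank k E * finrank k M := mul_comm _ _

section Powers

variable {k K : Type*} [Field k] [Field K] [Algebra k K] (p : ℕ) [ExpChar K p]

theorem mem_expleq {n : ℕ} {x : K} :
    x ∈ expleq k K p n ↔ x ^ p ^ n ∈ (algebraMap k K).range := by
  refine ⟨fun hx => ?_, fun hx => subset_adjoin k _ hx⟩
  induction hx using IntermediateField.adjoin_induction with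
  | mem x hx => exact hx
  | algebraMap a => exact ⟨a ^ p ^ n, map_pow _ _ _⟩
  | add x y _ _ hx hy => rw [add_pow_expChar_pow]; exact add_mem hx hy
  | mul x y _ _ hx hy => rw [mul_pow]; exact mul_mem hx hy
  | inv x _ hx =>
    obtain ⟨a, ha⟩ := hx
    exact ⟨a⁻¹, by rw [map_inv₀, ha, inv_pow]⟩

theorem expleq_zero : expleq k K p 0 = ⊥ := by
  ext x
  simp only [mem_expleq, pow_zero, pow_one, mem_bot, RingHom.mem_range, Set.mem_range]

theorem mem_expleq_succ_of_pow_mem {n : ℕ} {x : K} (hx : x ^ p ∈ (algebraMap k K).range) :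
    x ∈ expleq k K p (n + 1) := by
  obtain ⟨a, ha⟩ := hx
  exact (mem_expleq p).2 ⟨a ^ p ^ n, by rw [map_pow, ha, pow_succ', pow_mul]⟩

theorem pnPowers_eq_fieldRange_iterateFrobenius (n : ℕ) :
    pnPowers K p n = (iterateFrobenius K p n).fieldRange := by
  rw [pnPowers, ← Subfield.closure_eq (iterateFrobenius K p n).fieldRange]
  congr 1

theorem mem_pnPowers {n : ℕ} {x : K} : x ∈ pnPowers K p n ↔ ∃ y : K, y ^ p ^ n = x := by
  simp [pnPowers_eq_fieldRange_iterateFrobenius, iterateFrobenius_def]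

end Powers

theorem Modular.linearIndependent {k K : Type*} [Field k] [Field K] [Algebra k K] {p : ℕ}
    (hmod : Modular k K p) (n : ℕ) {ι : Type*} [Finite ι] {v : ι → K}
    (hvn : ∀ i, v i ∈ pnPowers K p n)
    (hv : LinearIndependent ↥(pnPowers K p n ⊓ (algebraMap k K).fieldRange) v) :
    LinearIndependent k v := by
  let s := (Set.finite_range v).toFinset
  have hs : (s : Set K) = Set.range v := Set.Finite.coe_toFinset _
  have hv' : LinearIndependent (algebraMap k K).fieldRange v := by
    rw [← linearIndepOn_id_range_iff hv.injective, ← hs]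
    refine hmod n s (hs ▸ Set.range_subset_iff.2 hvn) ?_
    have := (linearIndepOn_id_range_iff hv.injective).2 hv
    rwa [← hs] at this
  exact hv'.map_of_injective_injectiveₛ (algebraMap k K).rangeRestrictField (AddMonoidHom.id K)
    (fun a b h => (algebraMap k K).injective (congrArg Subtype.val h)) (fun _ _ h => h)
    (fun a x => (Algebra.smul_def a x).symm)

section RBasis

variable {k L : Type*} [Field k] [Field L] [Algebra k L] {p : ℕ}

theorem exists_rBasis_subset {S : Finset L} (hS : adjoin (pClosure k L p) (S : Set L) = ⊤) :
    ∃ B ⊆ S, RBasis k L p (B : Set L) := by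
  classical
  obtain ⟨B, hBS, hB⟩ := exists_minimal_le_of_wellFoundedLT
    (fun B : Finset L => adjoin (pClosure k L p) (B : Set L) = ⊤) S hS
  refine ⟨B, hBS, hB.prop, fun x hx hxmem => ?_⟩
  have hgen : adjoin (pClosure k L p) (B.erase x : Set L) = ⊤ := by
    rw [eq_top_iff, ← hB.prop, adjoin_le_iff, Finset.coe_erase]
    intro y hy
    by_cases hyx : y = x
    · exact hyx ▸ hxmem
    · exact subset_adjoin _ _ ⟨hy, hyx⟩
  exact Finset.notMem_erase x B (hB.2 hgen (Finset.erase_subset x B) hx)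

theorem diCard_le_card {S : Finset L} (hS : adjoin (pClosure k L p) (S : Set L) = ⊤) :
    diCard k L p ≤ S.card := by
  obtain ⟨B, hBS, hB⟩ := exists_rBasis_subset hS
  calc diCard k L p ≤ Cardinal.mk (B : Set L) := csInf_le (OrderBot.bddBelow _) ⟨B, hB, rfl⟩
    _ ≤ S.card := by
      rw [Finset.coe_sort_coe, Cardinal.mk_coe_finset]
      exact_mod_cast Finset.card_le_card hBS

theorem diCard_le_finrank [FiniteDimensional (pClosure k L p) L] :
    diCard k L p ≤ finrank (pClosure k L p) L := by
  classical
  let b := finBasis (pClosure k L p) L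
  refine (diCard_le_card (S := Finset.univ.image b) ?_).trans ?_
  · rw [eq_top_iff]
    intro x _
    refine algebra_adjoin_le_adjoin _ _ (Algebra.span_le_adjoin _ _ ?_)
    simp
  · exact_mod_cast Finset.card_image_le.trans (Finset.card_fin _).le

end RBasis

section Embedding

variable {k L K : Type*} [Field k] [Field L] [Field K] [Algebra k L] [Algebra k K] {p : ℕ}
  [ExpChar L p] [ExpChar K p]

theorem finrank_expleq_le_of_algHom (n : ℕ) [FiniteDimensional k (expleq k K p n)]
    (ι : L →ₐ[k] K) : finrank k (expleq k L p n) ≤ finrank k (expleq k K p n) := by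
  have hmaps : ∀ x ∈ expleq k L p n, ι x ∈ expleq k K p n := fun x hx => by
    obtain ⟨a, ha⟩ := (mem_expleq p).1 hx
    exact (mem_expleq p).2 ⟨a, by rw [← map_pow, ← ha, AlgHom.commutes]⟩
  refine LinearMap.finrank_le_finrank_of_injective
    (f := ι.toLinearMap.restrict (p := (expleq k L p n).toSubalgebra.toSubmodule)
      (q := (expleq k K p n).toSubalgebra.toSubmodule) hmaps) fun x y h => ?_
  exact Subtype.ext (ι.injective (congrArg Subtype.val h))

theorem finrank_expleq_one_le_finrank_pClosure [FiniteDimensional k L]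
    (hmod : Modular k K p) (ι : L →ₐ[k] K)
    (hroot : ∀ g : K, g ^ p ∈ (algebraMap k K).range → g ∈ Set.range ι) :
    finrank (expleq k L p 1) L ≤ finrank k (pClosure k L p) := by
  let b := finBasis (expleq k L p 1) L
  let σ : expleq k L p 1 → ↥(pnPowers K p 1 ⊓ (algebraMap k K).fieldRange) := fun m =>
    ⟨ι m ^ p, Subfield.mem_inf.2 ⟨(mem_pnPowers p).2 ⟨ι m, by rw [pow_one]⟩, by
      obtain ⟨a, ha⟩ := (mem_expleq p).1 m.2
      exact ⟨a, by rw [← AlgHom.commutes ι, ha, map_pow, pow_one]⟩⟩⟩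
  have hσ : Function.Surjective σ := by
    rintro ⟨r, hr⟩
    obtain ⟨y, hy⟩ := (mem_pnPowers p).1 (Subfield.mem_inf.1 hr).1
    obtain ⟨a, ha⟩ := (Subfield.mem_inf.1 hr).2
    rw [pow_one] at hy
    obtain ⟨x, rfl⟩ := hroot y ⟨a, by rw [ha, hy]⟩
    have hxa : ι (algebraMap k L a) = ι (x ^ p ^ 1) := by
      rw [AlgHom.commutes, pow_one, map_pow, ha, hy]
    exact ⟨⟨x, (mem_expleq p).2 ⟨a, ι.injective hxa⟩⟩, Subtype.ext hy⟩
  let φ : L →+ K := ((frobenius K p).comp ι.toRingHom).toAddMonoidHom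
  have hφ : LinearIndependent k (φ ∘ b) := by
    refine hmod.linearIndependent 1
      (fun i => (mem_pnPowers p).2 ⟨ι (b i), by simp [φ, frobenius_def]⟩) ?_
    refine b.linearIndependent.map_of_surjective_injectiveₛ σ φ hσ
      ((frobenius K p).injective.comp ι.injective) fun m x => ?_
    show ι ((m : L) * x) ^ p = ι m ^ p * ι x ^ p
    rw [map_mul, mul_pow]
  let c : Fin (finrank (expleq k L p 1) L) → pClosure k L p := fun i =>
    ⟨b i ^ p, subset_adjoin k _ ⟨b i, rfl⟩⟩
  have hc : LinearIndependent k c := .of_comp (ι.comp (pClosure k L p).val).toLinearMap <| by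
    convert hφ
    ext i
    simp [c, φ, frobenius_def]
  simpa using hc.fintype_card_le_finrank

theorem finrank_pClosure_le_finrank_expleq_one [FiniteDimensional k L]
    (hmod : Modular k K p) (ι : L →ₐ[k] K)
    (hroot : ∀ g : K, g ^ p ∈ (algebraMap k K).range → g ∈ Set.range ι) :
    finrank (pClosure k L p) L ≤ finrank k (expleq k L p 1) :=
  finrank_le_finrank_of_finrank_le_finrank (finrank_expleq_one_le_finrank_pClosure hmod ι hroot)

end Embedding

theorem diCard_expleq_le_finrank_expleq_one {k K : Type*} [Field k] [Field K] [Algebra k K]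
    {p : ℕ} [ExpChar K p] (hmod : Modular k K p)
    (hlq : ∀ n : ℕ, FiniteDimensional k (expleq k K p n)) (n : ℕ) :
    diCard k (expleq k K p n) p ≤ finrank k (expleq k K p 1) := by
  have := hlq n
  have := hlq 1
  have : FiniteDimensional (pClosure k (expleq k K p n) p) (expleq k K p n) := .right k _ _
  refine diCard_le_finrank.trans (Nat.cast_le.2 ?_)
  cases n with
  | zero =>
    calc finrank (pClosure k (expleq k K p 0) p) (expleq k K p 0)
        ≤ finrank k (expleq k K p 0) := finrank_top_le_finrank_of_isScalarTower _ _ _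
      _ = 1 := by rw [expleq_zero, IntermediateField.finrank_bot]
      _ ≤ finrank k (expleq k K p 1) := finrank_pos
  | succ n =>
    exact (finrank_pClosure_le_finrank_expleq_one hmod (expleq k K p (n + 1)).val
      fun g hg => ⟨⟨g, mem_expleq_succ_of_pow_mem p hg⟩, rfl⟩).trans
      (finrank_expleq_le_of_algHom 1 (expleq k K p (n + 1)).val)

theorem qFinite_of_modular_of_lqFinite_general
    (p : ℕ) [Fact p.Prime] (k K : Type*) [Field k] [Field K] [Algebra k K] [CharP k p]
    (hmod : Modular k K p)
    (hlq : ∀ n : ℕ, FiniteDimensional k ↥(expleq k K p n)) :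
    di k K p < Cardinal.aleph0 := by
  have := expChar_of_injective_algebraMap (algebraMap k K).injective p
  exact (ciSup_le (diCard_expleq_le_finrank_expleq_one hmod hlq)).trans_lt
    Cardinal.natCast_lt_aleph0

/-- A purely inseparable extension which is both modular and
`lq`-finite is `q`-finite. -/
theorem qFinite_of_modular_of_lqFinite
    (p : ℕ) [Fact p.Prime] (k K : Type*) [Field k] [Field K] [Algebra k K] [CharP k p]
    [IsPurelyInseparable k K]
    (hmod : Modular k K p)
    (hlq : ∀ n : ℕ, FiniteDimensional k ↥(expleq k K p n)) :
    di k K p < Cardinal.aleph0 :=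
  qFinite_of_modular_of_lqFinite_general p k K hmod hlq
end
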